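/- For every integer k ≥ 2 and every ℓ with 1 ≤ ℓ ≤ k - 1, ∑_{j=1}^{k} (-1)^j C(k, j) ∑_{m=0}^{2ℓ} (-1)^m C(2ℓ, m) (j/2)^m · S(2ℓ+j-m, j) / C(2ℓ+j-m, j) = 0, where S denotes the Stirling numbers of the second kind. -/

import Mathlib

open scoped Classical BigOperators Nat

/-- Weighted Stirling numbers of the second kind (Carlitz). -/
noncomputable def weightedR (n k : ℕ) (r : ℝ) : ℝ :=
  (1 / (k ! : ℝ)) * ∑ j ∈ Finset.range (k + 1),
    (-1 : ℝ) ^ (k - j) * (k.choose j) * (r + j) ^ n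

/-- Central factorial numbers of the second kind. -/
noncomputable def centralT (n ℓ : ℕ) : ℝ :=
  (1 / (ℓ ! : ℝ)) * ∑ j ∈ Finset.range (ℓ + 1),
    (-1 : ℝ) ^ j * (ℓ.choose j) * ((ℓ : ℝ) / 2 - j) ^ n

/-- Stirling numbers of the second kind. -/
def stirlingS : ℕ → ℕ → ℕ
  | 0, 0 => 1
  | 0, _ + 1 => 0
  | _ + 1, 0 => 0
  | n + 1, k + 1 => (k + 1) * stirlingS n (k + 1) + stirlingS n k

/-- The sinc function. -/
noncomputable def sinc (z : ℂ) : ℂ := if z = 0 then 1 else Complex.sin z / z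

/-- The hyperbolic sinc function. -/
noncomputable def sinhc (z : ℂ) : ℂ := if z = 0 then 1 else Complex.sinh z / z

/-- Partial Bell polynomials. -/
noncomputable def bellB (n k : ℕ) (x : ℕ → ℝ) : ℝ :=
  ∑ ℓ ∈ Finset.univ.filter (fun ℓ : Fin n → Fin (n + 1) =>
      (∑ i, (i.1 + 1) * (ℓ i).1) = n ∧ (∑ i, (ℓ i).1) = k),
    ((n ! : ℝ) / ∏ i, ((ℓ i).1)!) * ∏ i, (x (i.1 + 1) / (i.1 + 1)!) ^ (ℓ i).1

/-- Rising factorial of a real number. -/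
noncomputable def risingF (x : ℝ) (k : ℕ) : ℝ := ∏ i ∈ Finset.range k, (x + i)

/-- Number of set partitions of an `n`-element set into `ℓ` odd-sized blocks. -/
noncomputable def oddPartCount (n ℓ : ℕ) : ℕ :=
  ((Finset.univ : Finset (Finset (Finset (Fin n)))).filter
    (fun P : Finset (Finset (Fin n)) => P.card = ℓ ∧ (∀ b ∈ P, Odd b.card) ∧
      ((P : Set (Finset (Fin n))).PairwiseDisjoint id) ∧
      P.sup id = Finset.univ)).card

/-!
Let `s = sinh (X / 2) / (X / 2)`. Then `(X s) ^ j = (e^{X/2} - e^{-X/2}) ^ j = e^{-jX/2} (e^X - 1) ^ j`,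
and `(e^X - 1) ^ j / j!` is the exponential generating function of `S(·, j)`; comparing coefficients
shows that the inner sum is `(2ℓ)! [X^{2ℓ}] s ^ j`. The outer alternating sum is then
`(2ℓ)! [X^{2ℓ}] (1 - s) ^ k`, which vanishes because `s` is even with `s(0) = 1`, so that
`X^{2k} ∣ (1 - s) ^ k`, while `2ℓ < 2k`.
-/

open Finset PowerSeries Nat

theorem stirlingS_eq_stirlingSecond : ∀ n k : ℕ, stirlingS n k = stirlingSecond n k
  | 0, 0 | 0, _ + 1 | _ + 1, 0 => rfl
  | n + 1, k + 1 => by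
    rw [stirlingS, stirlingSecond, stirlingS_eq_stirlingSecond n (k + 1),
      stirlingS_eq_stirlingSecond n k]

namespace PowerSeries

section CommRing

variable {A : Type*} [CommRing A]

theorem coeff_pow_eq_zero_of_X_pow_dvd {f : A⟦X⟧} {d : ℕ} (hf : X ^ d ∣ f) {n k : ℕ}
    (hn : n < d * k) : coeff n (f ^ k) = 0 := by
  have hdvd : (X : A⟦X⟧) ^ (d * k) ∣ f ^ k := pow_mul (X : A⟦X⟧) d k ▸ pow_dvd_pow_of_dvd hf k
  exact X_pow_dvd_iff.mp hdvd n hn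

theorem sum_Icc_alternating_choose_mul_coeff_pow (f : A⟦X⟧) {n : ℕ} (hn : n ≠ 0) (k : ℕ) :
    ∑ j ∈ Icc 1 k, (-1) ^ j * (k.choose j : A) * coeff n (f ^ j) = coeff n ((1 - f) ^ k) := by
  rw [sub_eq_neg_add, add_pow, map_sum, Nat.range_succ_eq_Icc_zero,
    ← insert_Icc_add_one_left_eq_Icc (Nat.zero_le k), sum_insert (by simp)]
  simp only [pow_zero, one_pow, Nat.choose_zero_right, Nat.cast_one, coeff_one, if_neg hn,
    zero_add, mul_one]
  refine sum_congr rfl fun j _ => ?_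
  rw [neg_pow f, ← map_natCast (C (R := A)), ← map_one (C (R := A)), ← map_neg, ← map_pow,
    mul_right_comm (C _), ← map_mul, coeff_C_mul]

variable [Algebra ℚ A]

theorem X_dvd_exp_sub_one : (X : A⟦X⟧) ∣ exp A - 1 :=
  X_dvd_iff.mpr (by simp)

theorem rescale_exp_pow (a : A) (j : ℕ) : rescale a (exp A) ^ j = rescale (j * a) (exp A) := by
  rw [← map_pow, exp_pow_eq_rescale_exp, rescale_rescale]

theorem rescale_exp_sub_rescale_exp_pow (b : A) (j : ℕ) :
    (rescale (b + 1) (exp A) - rescale b (exp A)) ^ j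
      = rescale (j * b) (exp A) * (exp A - 1) ^ j := by
  rw [← rescale_exp_pow, ← mul_pow, mul_sub, mul_one, ← exp_mul_exp_eq_exp_add, rescale_one]
  rfl

theorem derivative_exp_sub_one_pow_succ (j : ℕ) :
    d⁄dX A ((exp A - 1) ^ (j + 1))
      = C ((j : A) + 1) * ((exp A - 1) ^ (j + 1) + (exp A - 1) ^ j) := by
  rw [derivative_pow, map_sub, derivative_one, derivative_exp, sub_zero, Nat.add_sub_cancel]
  simp only [map_add, map_natCast, map_one, Nat.cast_add, Nat.cast_one]
  ring

theorem factorial_mul_coeff_exp_sub_one_pow (n j : ℕ) :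
    (n ! : A) * coeff n ((exp A - 1) ^ j) = j ! * stirlingSecond n j := by
  induction n generalizing j with
  | zero => cases j <;> simp
  | succ n ih =>
    cases j with
    | zero => simp [coeff_one]
    | succ j =>
      have hderiv := congrArg (coeff n) (derivative_exp_sub_one_pow_succ (A := A) j)
      rw [coeff_derivative, coeff_C_mul, map_add] at hderiv
      calc ((n + 1)! : A) * coeff (n + 1) ((exp A - 1) ^ (j + 1))
          = n ! * (coeff (n + 1) ((exp A - 1) ^ (j + 1)) * (n + 1)) := by
            push_cast [factorial_succ]; ring
        _ = (j + 1) * (n ! * coeff n ((exp A - 1) ^ (j + 1))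
              + n ! * coeff n ((exp A - 1) ^ j)) := by
            rw [hderiv]; ring
        _ = (j + 1)! * stirlingSecond (n + 1) (j + 1) := by
            rw [ih, ih, stirlingSecond_succ_succ, factorial_succ]
            push_cast; ring

end CommRing

section Field

variable (K : Type*) [Field K] [CharZero K]

/-- The power series of `sinh (X / 2) / (X / 2)`. -/
noncomputable def sinhcHalf : K⟦X⟧ :=
  mk fun n => coeff (n + 1) (rescale (2⁻¹ : K) (exp K) - rescale (-2⁻¹ : K) (exp K))

variable {K}

theorem X_mul_sinhcHalf :
    X * sinhcHalf K = rescale (2⁻¹ : K) (exp K) - rescale (-2⁻¹ : K) (exp K) := by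
  rw [sinhcHalf, ← sub_const_eq_X_mul_shift, map_sub, ← coeff_zero_eq_constantCoeff_apply,
    ← coeff_zero_eq_constantCoeff_apply]
  simp

theorem X_sq_dvd_one_sub_sinhcHalf : (X : K⟦X⟧) ^ 2 ∣ 1 - sinhcHalf K := by
  refine X_pow_dvd_iff.mpr fun m hm => ?_
  interval_cases m <;> simp [sinhcHalf, coeff_one]
  norm_num

theorem factorial_mul_coeff_sinhcHalf_pow (n j : ℕ) :
    (n ! : K) * coeff n (sinhcHalf K ^ j) = ∑ m ∈ range (n + 1),
      (-1) ^ m * (n.choose m : K) * ((j : K) / 2) ^ m * stirlingSecond (n + j - m) j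
        / (n + j - m).choose j := by
  have hfactor : X ^ j * sinhcHalf K ^ j = rescale (-(j / 2) : K) (exp K) * (exp K - 1) ^ j := by
    rw [← mul_pow, X_mul_sinhcHalf, show (-(j / 2) : K) = j * -2⁻¹ by ring,
      ← rescale_exp_sub_rescale_exp_pow]
    norm_num
  have hvanish : ∀ m ∈ range (n + j + 1), m ∉ range (n + 1) →
      (n ! : K) * (coeff m (rescale (-(j / 2) : K) (exp K)) * coeff (n + j - m) ((exp K - 1) ^ j))
        = 0 := by
    intro m hm hm'
    rw [mem_range] at hm hm'
    rw [coeff_pow_eq_zero_of_X_pow_dvd (pow_one (X : K⟦X⟧) ▸ X_dvd_exp_sub_one) (by omega),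
      mul_zero, mul_zero]
  rw [← coeff_X_pow_mul _ j, hfactor, coeff_mul, Nat.sum_antidiagonal_eq_sum_range_succ_mk,
    mul_sum, ← sum_subset (range_subset_range.2 (by omega)) hvanish]
  refine sum_congr rfl fun m hm => ?_
  have hmn : m ≤ n := Nat.lt_succ_iff.mp (mem_range.mp hm)
  have hstirling : coeff (n + j - m) ((exp K - 1) ^ j)
      = (j ! * stirlingSecond (n + j - m) j / (n + j - m)! : K) := by
    rw [eq_div_iff (Nat.cast_ne_zero.mpr (Nat.factorial_ne_zero _)), mul_comm,
      factorial_mul_coeff_exp_sub_one_pow]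
  have hfac : ((n - m)! : K) ≠ 0 := Nat.cast_ne_zero.mpr (Nat.factorial_ne_zero _)
  rw [coeff_rescale, neg_pow, coeff_exp, hstirling, Nat.cast_choose K hmn,
    Nat.cast_choose K (by omega : j ≤ n + j - m), show n + j - m - j = n - m by omega]
  simp only [map_div₀, map_one, map_natCast]
  field_simp

end Field

end PowerSeries

theorem stmt8_general (k ℓ : ℕ) (h1 : 1 ≤ ℓ) (h2 : ℓ ≤ k - 1) :
    ∑ j ∈ Finset.Icc 1 k, (-1 : ℝ) ^ j * (k.choose j) *
      ∑ m ∈ Finset.range (2 * ℓ + 1),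
        (-1 : ℝ) ^ m * ((2 * ℓ).choose m) * ((j : ℝ) / 2) ^ m *
          (stirlingS (2 * ℓ + j - m) j) / ((2 * ℓ + j - m).choose j) = 0 := by
  simp_rw [stirlingS_eq_stirlingSecond, ← factorial_mul_coeff_sinhcHalf_pow,
    mul_left_comm _ ((2 * ℓ)! : ℝ), ← mul_sum]
  rw [sum_Icc_alternating_choose_mul_coeff_pow _ (by omega),
    coeff_pow_eq_zero_of_X_pow_dvd X_sq_dvd_one_sub_sinhcHalf (by omega), mul_zero]

theorem stmt8 (k ℓ : ℕ) (hk : 2 ≤ k) (h1 : 1 ≤ ℓ) (h2 : ℓ ≤ k - 1) :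
    ∑ j ∈ Finset.Icc 1 k, (-1 : ℝ) ^ j * (k.choose j) *
      ∑ m ∈ Finset.range (2 * ℓ + 1),
        (-1 : ℝ) ^ m * ((2 * ℓ).choose m) * ((j : ℝ) / 2) ^ m *
          (stirlingS (2 * ℓ + j - m) j) / ((2 * ℓ + j - m).choose j) = 0 :=
  stmt8_general k ℓ h1 h2
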